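/- arXiv:math/0409509 — 10 statements merged into one kernel-verified Lean document; each statement's English description precedes it below -/
import Mathlib

section
/- Define a(n) = Σ_{k=0}^{n} ((C(n,k) mod 2) · 2^k). Then for all n ≥ 0, a(2n+1) = 3·a(2n). -/
/-- `a n = Σ_{k=0}^{n} (C(n,k) mod 2) · 2^k`. -/
def a (n : ℕ) : ℕ := ∑ k ∈ Finset.range (n + 1), (Nat.choose n k % 2) * 2 ^ k

/-! By Lucas' theorem at `p = 2`, `C(2n + r, 2j + s) ≡ C(r, s) · C(n, j) (mod 2)` for `r, s < 2`.
Splitting the sum defining `a (2n + r)` into even and odd indices therefore factors it as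
`a r · Σ_j (C(n, j) mod 2) · 4^j`, and `a 1 = 3 · a 0`. -/

open Finset

theorem Finset.sum_range_two_mul {M : Type*} [AddCommMonoid M] (f : ℕ → M) (m : ℕ) :
    ∑ k ∈ range (2 * m), f k = ∑ j ∈ range m, (f (2 * j) + f (2 * j + 1)) := by
  induction m with
  | zero => simp
  | succ m ih => rw [Nat.mul_succ, sum_range_succ, sum_range_succ, sum_range_succ, ih, add_assoc]

theorem Nat.choose_two_mul_add_mod_two {r s : ℕ} (hr : r < 2) (hs : s < 2) (n j : ℕ) :
    (2 * n + r).choose (2 * j + s) % 2 = r.choose s * n.choose j % 2 := by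
  have lucas := Choose.choose_modEq_choose_mod_mul_choose_div_nat
    (n := 2 * n + r) (k := 2 * j + s) (p := 2)
  rwa [show (2 * n + r) % 2 = r by omega, show (2 * j + s) % 2 = s by omega,
    show (2 * n + r) / 2 = n by omega, show (2 * j + s) / 2 = j by omega] at lucas

theorem a_eq_sum_range_of_lt {n m : ℕ} (h : n < m) :
    a n = ∑ k ∈ range m, n.choose k % 2 * 2 ^ k := by
  refine sum_subset (range_subset_range.mpr h) fun k _ hk => ?_
  rw [Nat.choose_eq_zero_of_lt (by simpa using hk), Nat.zero_mod, zero_mul]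

theorem a_two_mul_add {r : ℕ} (hr : r < 2) (n : ℕ) :
    a (2 * n + r) = a r * ∑ j ∈ range (n + 1), n.choose j % 2 * 4 ^ j := by
  rw [a_eq_sum_range_of_lt (show 2 * n + r < 2 * (n + 1) by omega), sum_range_two_mul,
    a_eq_sum_range_of_lt hr, mul_sum]
  refine sum_congr rfl fun j _ => ?_
  have even := Nat.choose_two_mul_add_mod_two hr (show 0 < 2 by norm_num) n j
  have odd := Nat.choose_two_mul_add_mod_two hr (show 1 < 2 by norm_num) n j
  rw [add_zero] at even
  rw [even, odd, pow_succ, pow_mul]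
  interval_cases r
  · simp [sum_range_succ]
  · simp [sum_range_succ]
    ring

theorem stmt3 (n : ℕ) : a (2 * n + 1) = 3 * a (2 * n) := by
  have a_one : a 1 = 3 * a 0 := by decide
  rw [a_two_mul_add (by norm_num), ← add_zero (2 * n), a_two_mul_add (by norm_num), a_one,
    mul_assoc]
end

section
/- For every integer D and every n ≥ 0, Σ_{k=0}^{⌊n/2⌋} D^k · C(n, 2k+1) equals the coefficient of x^n in the rational power series x/(1 - 2x + (1-D)x^2). -/
/-!
Write `a n = ∑ₖ Dᵏ C(n, 2k+1)` and `c n = ∑ₖ Dᵏ C(n, 2k)`, the two coordinates of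
`(1 + √D)ⁿ = c n + a n √D`. Pascal's rule gives `a (n+1) = c n + a n` and
`c (n+1) = c n + D a n`, i.e. `A = X (E + A)` and `E = 1 + X (E + D A)` for the generating
series `A`, `E`. Eliminating `E` yields `A ((1 - X)² - D X²) = X`.
-/

open Finset PowerSeries

variable {R : Type*} [CommRing R]

lemma sum_range_pow_mul_choose_eq_of_le (D : R) {n j N M : ℕ} (hNM : N ≤ M)
    (hN : n < 2 * N + j) :
    ∑ k ∈ range N, D ^ k * n.choose (2 * k + j) =
      ∑ k ∈ range M, D ^ k * n.choose (2 * k + j) :=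
  sum_subset (range_subset_range.2 hNM) fun k _ hk => by
    rw [mem_range, not_lt] at hk
    rw [Nat.choose_eq_zero_of_lt (by omega), Nat.cast_zero, mul_zero]

def oddChooseSum (D : R) (n : ℕ) : R := ∑ k ∈ range (n + 1), D ^ k * n.choose (2 * k + 1)

def evenChooseSum (D : R) (n : ℕ) : R := ∑ k ∈ range (n + 1), D ^ k * n.choose (2 * k)

lemma oddChooseSum_zero (D : R) : oddChooseSum D 0 = 0 := by
  simp [oddChooseSum]

lemma evenChooseSum_zero (D : R) : evenChooseSum D 0 = 1 := by
  simp [evenChooseSum]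

lemma evenChooseSum_eq_sum_range_add_two (D : R) (n : ℕ) :
    evenChooseSum D n = ∑ k ∈ range (n + 2), D ^ k * n.choose (2 * k) :=
  sum_range_pow_mul_choose_eq_of_le D (j := 0) (n + 1).le_succ (by omega)

lemma oddChooseSum_eq_sum_range_add_two (D : R) (n : ℕ) :
    oddChooseSum D n = ∑ k ∈ range (n + 2), D ^ k * n.choose (2 * k + 1) :=
  sum_range_pow_mul_choose_eq_of_le D (n + 1).le_succ (by omega)

lemma oddChooseSum_succ (D : R) (n : ℕ) :
    oddChooseSum D (n + 1) = evenChooseSum D n + oddChooseSum D n := by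
  rw [oddChooseSum, evenChooseSum_eq_sum_range_add_two, oddChooseSum_eq_sum_range_add_two,
    ← sum_add_distrib]
  simp only [Nat.choose_succ_succ, Nat.cast_add, mul_add]

lemma evenChooseSum_succ (D : R) (n : ℕ) :
    evenChooseSum D (n + 1) = evenChooseSum D n + D * oddChooseSum D n := by
  calc evenChooseSum D (n + 1)
      = ∑ k ∈ range (n + 1), D ^ (k + 1) * (n + 1).choose (2 * k + 1 + 1) + 1 := by
        simp [evenChooseSum, sum_range_succ' _ (n + 1), mul_add]
    _ = (∑ k ∈ range (n + 1), D ^ (k + 1) * n.choose (2 * (k + 1)) + D ^ 0 * n.choose (2 * 0))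
          + D * oddChooseSum D n := by
        simp only [Nat.choose_succ_succ, Nat.cast_add, mul_add, sum_add_distrib, oddChooseSum,
          mul_sum, pow_succ, Nat.succ_eq_add_one, pow_zero, mul_zero, Nat.choose_zero_right]
        ring_nf
    _ = evenChooseSum D n + D * oddChooseSum D n := by
        rw [← sum_range_succ' (fun k => D ^ k * (n.choose (2 * k) : R)),
          evenChooseSum_eq_sum_range_add_two]

lemma mk_oddChooseSum_mul (D : R) :
    mk (oddChooseSum D) * (1 - 2 * X + C (1 - D) * X ^ 2) = X := by
  set A := mk (oddChooseSum D)
  set E := mk (evenChooseSum D)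
  have hA : A = X * (E + A) := by
    ext (_ | n) <;> simp [A, E, oddChooseSum_zero, oddChooseSum_succ]
  have hE : E = 1 + X * (E + C D * A) := by
    ext (_ | n) <;> simp [A, E, evenChooseSum_zero, evenChooseSum_succ]
  rw [map_sub, map_one]
  linear_combination (1 - X) * hA + X * hE

lemma mk_oddChooseSum_eq {k : Type*} [Field k] (D : k) :
    mk (oddChooseSum D) = X * (1 - 2 * X + C (1 - D) * X ^ 2)⁻¹ :=
  (eq_mul_inv_iff_mul_eq (by simp)).2 (mk_oddChooseSum_mul D)

theorem stmt4 (D : ℤ) (n : ℕ) :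
    (∑ k ∈ Finset.range (n / 2 + 1), (D : ℚ) ^ k * Nat.choose n (2 * k + 1)) =
      PowerSeries.coeff (R := ℚ) n
        ((PowerSeries.X : PowerSeries ℚ) *
          (1 - 2 * PowerSeries.X + PowerSeries.C (R := ℚ) (1 - (D : ℚ)) * PowerSeries.X ^ 2)⁻¹) := by
  rw [← mk_oddChooseSum_eq, coeff_mk, oddChooseSum]
  exact sum_range_pow_mul_choose_eq_of_le _ (by omega) (by omega)
end

section
/- For all n ≥ 0, Σ_{k=0}^{n+1} (k+1)·[C(2n+1,k) - C(2n+1,k-1)] = ((n+2)/2)·C(2n+2,n+1) - 4^n. -/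
/-!
Summation by parts against the weights `k + 1` turns the left side into
`(n + 2) C(2n+1, n+1) - ∑_{k ≤ n} C(2n+1, k)`. By the symmetry `C(2n+1, k) = C(2n+1, 2n+1-k)`
the remaining sum is half of `2^(2n+1)`, i.e. `4^n`, and Pascal's rule with the same symmetry
gives `C(2n+2, n+1) = 2 C(2n+1, n+1)`.
-/

theorem sum_range_succ_mul_sub_prev {R : Type*} [CommRing R] (g : ℕ → R) (m : ℕ) :
    (∑ k ∈ Finset.range (m + 1), ((k : R) + 1) * (g k - if k = 0 then 0 else g (k - 1))) =
      ((m : R) + 1) * g m - ∑ k ∈ Finset.range m, g k := by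
  induction m with
  | zero => simp
  | succ m ih =>
    rw [Finset.sum_range_succ, ih, Finset.sum_range_succ, if_neg m.succ_ne_zero,
      Nat.add_sub_cancel]
    push_cast
    ring

theorem Nat.choose_two_mul_add_two_succ (n : ℕ) :
    (2 * n + 2).choose (n + 1) = 2 * (2 * n + 1).choose (n + 1) := by
  rw [Nat.choose_succ_succ, ← Nat.choose_symm_half n]
  ring

theorem stmt5 (n : ℕ) :
    (∑ k ∈ Finset.range (n + 2), ((k : ℚ) + 1) *
        ((Nat.choose (2 * n + 1) k : ℚ) - if k = 0 then 0 else (Nat.choose (2 * n + 1) (k - 1) : ℚ))) =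
      ((n : ℚ) + 2) / 2 * Nat.choose (2 * n + 2) (n + 1) - 4 ^ n := by
  have halfway : (∑ k ∈ Finset.range (n + 1), ((2 * n + 1).choose k : ℚ)) = 4 ^ n := by
    exact_mod_cast Nat.sum_range_choose_halfway n
  rw [sum_range_succ_mul_sub_prev (fun k => ((2 * n + 1).choose k : ℚ)) (n + 1), halfway,
    Nat.choose_two_mul_add_two_succ]
  push_cast
  ring
end

section
/- For every n ≥ 1, the number of cubic residues modulo 8^n equals (4·8^n + 3)/7. -/
/-!
Modulo `2 ^ (3k + 3)` the odd residues are the units, and the unit group has order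
`2 ^ (3k + 2)`, prime to `3`, so every unit is a cube. An even residue `2t` has cube `8t³`,
which only depends on `t³` modulo `2 ^ (3k)`, and multiplication by `8` embeds `ZMod (2 ^ (3k))`
into `ZMod (2 ^ (3k + 3))`. So the number `c k` of cubes modulo `8 ^ k` satisfies
`c (k + 1) = 4 * 8 ^ k + c k` and `c 0 = 1`, whence `7 * c k = 4 * 8 ^ k + 3`.
-/

open Finset
open scoped Nat

theorem exists_pow_eq_of_isUnit {M : Type*} [Monoid M] {e : ℕ} (he : (Nat.card Mˣ).Coprime e)
    {x : M} (hx : IsUnit x) : ∃ y, y ^ e = x := by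
  obtain ⟨u, rfl⟩ := hx
  obtain ⟨v, rfl⟩ := (Nat.Coprime.pow_left_bijective he).surjective u
  exact ⟨v, Units.val_pow_eq_pow_val v e⟩

theorem filter_isUnit_image_pow {M : Type*} [Monoid M] [Fintype M] [DecidableEq M]
    [DecidablePred (IsUnit : M → Prop)] {e : ℕ} (he : (Nat.card Mˣ).Coprime e) :
    (univ.image (· ^ e) : Finset M).filter IsUnit = univ.map ⟨Units.val, Units.val_injective⟩ := by
  ext x
  simp only [mem_filter, mem_image, mem_univ, true_and, mem_map, Function.Embedding.coeFn_mk]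
  constructor
  · rintro ⟨-, u, rfl⟩
    exact ⟨u, rfl⟩
  · rintro ⟨u, rfl⟩
    exact ⟨exists_pow_eq_of_isUnit he u.isUnit, u.isUnit⟩

namespace ZMod

theorem exists_eq_mul_of_not_isUnit {p k n : ℕ} (hp : p.Prime) (hn : n ∣ p ^ k) {x : ZMod n}
    (hx : ¬IsUnit x) : ∃ y, x = p * y := by
  have : NeZero n := ⟨fun h => pow_ne_zero k hp.ne_zero (zero_dvd_iff.mp (h ▸ hn))⟩
  have hdvd : p ∣ x.val := by
    by_contra hpx
    have hcop : x.val.Coprime n :=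
      ((Nat.coprime_comm.mp (hp.coprime_iff_not_dvd.mpr hpx)).pow_right k).coprime_dvd_right hn
    rw [← natCast_zmod_val x, isUnit_iff_coprime] at hx
    exact hx hcop
  obtain ⟨t, ht⟩ := hdvd
  exact ⟨t, by rw [← natCast_zmod_val x, ht, Nat.cast_mul]⟩

/-- Identifies `ZMod m` with the ideal generated by `a` in `ZMod (a * m)`. -/
def scaleUp (a m : ℕ) : ZMod m →+ ZMod (a * m) :=
  lift m ⟨(AddMonoidHom.mulLeft (a : ZMod (a * m))).comp (Int.castAddHom _), by
    simp [← Nat.cast_mul]⟩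

theorem scaleUp_intCast (a m : ℕ) (k : ℤ) : scaleUp a m k = a * k :=
  lift_coe _ _ _

theorem scaleUp_cast (a m : ℕ) (w : ZMod (a * m)) : scaleUp a m (cast w) = a * w := by
  obtain ⟨k, rfl⟩ := intCast_surjective w
  rw [cast_intCast (dvd_mul_left m a), scaleUp_intCast]

theorem scaleUp_injective {a : ℕ} (ha : a ≠ 0) (m : ℕ) : Function.Injective (scaleUp a m) := by
  rw [injective_iff_map_eq_zero]
  intro z hz
  obtain ⟨k, rfl⟩ := intCast_surjective z
  rw [scaleUp_intCast, ← Int.cast_natCast, ← Int.cast_mul, intCast_zmod_eq_zero_iff_dvd,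
    Nat.cast_mul, mul_dvd_mul_iff_left (by exact_mod_cast ha)] at hz
  exact (intCast_zmod_eq_zero_iff_dvd k m).mpr hz

open scoped Classical in
theorem filter_not_isUnit_image_pow {p e j : ℕ} [hp : Fact p.Prime] (he : e ≠ 0) :
    (univ.image (· ^ e) : Finset (ZMod (p ^ e * p ^ j))).filter (¬IsUnit ·) =
      (univ.image (· ^ e) : Finset (ZMod (p ^ j))).image (scaleUp (p ^ e) (p ^ j)) := by
  let π := castHom (dvd_mul_left (p ^ j) (p ^ e)) (ZMod (p ^ j))
  have hscale (t : ZMod (p ^ e * p ^ j)) : scaleUp (p ^ e) (p ^ j) (π t ^ e) = (p * t) ^ e := by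
    rw [← map_pow, castHom_apply, scaleUp_cast, mul_pow, Nat.cast_pow]
  ext x
  simp only [mem_filter, mem_image, mem_univ, true_and]
  constructor
  · rintro ⟨⟨y, rfl⟩, hy⟩
    obtain ⟨t, rfl⟩ := exists_eq_mul_of_not_isUnit hp.out (pow_add p e j).symm.dvd
      (mt (isUnit_pow_iff he).mpr hy)
    exact ⟨_, ⟨π t, rfl⟩, hscale t⟩
  · rintro ⟨_, ⟨w, rfl⟩, rfl⟩
    obtain ⟨t, rfl⟩ := ringHom_surjective π w
    refine ⟨⟨p * t, (hscale t).symm⟩, fun hunit => ?_⟩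
    rw [hscale, isUnit_pow_iff he] at hunit
    exact (isUnit_prime_iff_not_dvd hp.out).mp (isUnit_of_mul_isUnit_left hunit)
      ((dvd_pow_self p he).mul_right _)

end ZMod

/-- Junk value `0` for `n = 0`, where `ZMod 0 = ℤ` has infinitely many `e`-th powers. -/
noncomputable def numPowerResidues (e n : ℕ) : ℕ := Nat.card (Set.range fun x : ZMod n => x ^ e)

theorem numPowerResidues_eq_card_image (e n : ℕ) [NeZero n] :
    numPowerResidues e n = #((univ : Finset (ZMod n)).image (· ^ e)) := by
  classical
  rw [numPowerResidues, Nat.card_eq_card_toFinset, Set.toFinset_range]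

theorem numPowerResidues_prime_pow_mul {p e j : ℕ} [Fact p.Prime] (he : e ≠ 0)
    (hφ : (φ (p ^ e * p ^ j)).Coprime e) :
    numPowerResidues e (p ^ e * p ^ j) = φ (p ^ e * p ^ j) + numPowerResidues e (p ^ j) := by
  classical
  rw [← ZMod.card_units_eq_totient, Fintype.card_eq_nat_card] at hφ ⊢
  rw [numPowerResidues_eq_card_image, numPowerResidues_eq_card_image,
    ← card_filter_add_card_filter_not IsUnit, filter_isUnit_image_pow hφ,
    ZMod.filter_not_isUnit_image_pow he, card_map, card_univ, Fintype.card_eq_nat_card,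
    card_image_of_injective _ (ZMod.scaleUp_injective (pow_ne_zero e (NeZero.ne p)) _)]

theorem numPowerResidues_three_eight_pow_succ (k : ℕ) :
    numPowerResidues 3 (8 ^ (k + 1)) = 4 * 8 ^ k + numPowerResidues 3 (8 ^ k) := by
  have h8 (i : ℕ) : 8 ^ i = 2 ^ (3 * i) := by rw [pow_mul]; norm_num
  have hφ : φ (2 ^ 3 * 2 ^ (3 * k)) = 4 * 8 ^ k := by
    rw [← pow_add, show 3 + 3 * k = 3 * k + 2 + 1 by ring,
      Nat.totient_prime_pow_succ Nat.prime_two, pow_add, h8]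
    norm_num
    ring
  have hcop : (4 * 8 ^ k).Coprime 3 :=
    Nat.Coprime.mul_left (by norm_num) (Nat.Coprime.pow_left k (by norm_num))
  rw [h8, h8, show 3 * (k + 1) = 3 + 3 * k by ring, pow_add,
    numPowerResidues_prime_pow_mul three_ne_zero (hφ ▸ hcop), hφ, h8]

theorem stmt7_general (n : ℕ) :
    7 * ((Finset.univ : Finset (ZMod (8 ^ n))).image (fun x => x ^ 3)).card =
      4 * 8 ^ n + 3 := by
  rw [← numPowerResidues_eq_card_image]
  induction n with
  | zero => rw [numPowerResidues_eq_card_image]; decide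
  | succ k ih => rw [numPowerResidues_three_eight_pow_succ, mul_add, ih, pow_succ]; ring

theorem stmt7 (n : ℕ) (hn : 1 ≤ n) :
    7 * ((Finset.univ : Finset (ZMod (8 ^ n))).image (fun x => x ^ 3)).card =
      4 * 8 ^ n + 3 :=
  stmt7_general n
end

section
/- For all n ≥ 0, lcm(3n+1, 3n+2, 3n+3) = (3/4)·(9n^3 + 18n^2 + 11n + 2)·(3 + (-1)^n). -/
/-
The lcm of `m + 1` and `m + 2` is their product, and since `(m + 1) (m + 2) ≡ 2 [MOD m]`, the
further lcm with `m` divides out exactly `gcd(m, 2)`. For `m = 3n + 1` this is `1` or `2`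
according to the parity of `n`, which is what the factor `(3 + (-1)^n) / 4` encodes, while
`(3n + 1)(3n + 2)(3n + 3) = 3 (9n³ + 18n² + 11n + 2)`.
-/

theorem Nat.gcd_self_succ_mul_add_two (m : ℕ) : Nat.gcd m ((m + 1) * (m + 2)) = Nat.gcd m 2 := by
  have : (m + 1) * (m + 2) = 2 + m * (m + 3) := by ring
  rw [this, Nat.gcd_add_mul_left_right]

theorem Nat.lcm_three_consecutive_mul_gcd_two (m : ℕ) :
    Nat.lcm m (Nat.lcm (m + 1) (m + 2)) * Nat.gcd m 2 = m * (m + 1) * (m + 2) := by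
  have hcop : Nat.Coprime (m + 1) (m + 2) := Nat.coprime_self_add_right.mpr (Nat.coprime_one_right _)
  rw [hcop.lcm_eq_mul, ← Nat.gcd_self_succ_mul_add_two, mul_comm, Nat.gcd_mul_lcm, mul_assoc]

theorem gcd_three_mul_add_one_two_mul_three_add_neg_one_pow (n : ℕ) :
    (Nat.gcd (3 * n + 1) 2 : ℚ) * (3 + (-1) ^ n) = 4 := by
  rcases Nat.even_or_odd n with hn | hn
  · have : Nat.gcd (3 * n + 1) 2 = 1 := by
      obtain ⟨k, rfl⟩ := hn
      rw [show 3 * (k + k) + 1 = 1 + 2 * (3 * k) by ring, Nat.gcd_add_mul_left_left]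
      rfl
    rw [this, hn.neg_one_pow]
    norm_num
  · have : Nat.gcd (3 * n + 1) 2 = 2 := by
      obtain ⟨k, rfl⟩ := hn
      rw [show 3 * (2 * k + 1) + 1 = 2 * (3 * k + 2) by ring]
      exact Nat.gcd_eq_right (dvd_mul_right 2 _)
    rw [this, hn.neg_one_pow]
    norm_num

theorem stmt8 (n : ℕ) :
    (Nat.lcm (3 * n + 1) (Nat.lcm (3 * n + 2) (3 * n + 3)) : ℚ) =
      3 / 4 * (9 * (n : ℚ) ^ 3 + 18 * (n : ℚ) ^ 2 + 11 * n + 2) * (3 + (-1 : ℚ) ^ n) := by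
  have hlcm := congrArg (Nat.cast : ℕ → ℚ) (Nat.lcm_three_consecutive_mul_gcd_two (3 * n + 1))
  have hgcd := gcd_three_mul_add_one_two_mul_three_add_neg_one_pow n
  have hgcd_ne : (Nat.gcd (3 * n + 1) 2 : ℚ) ≠ 0 := by positivity
  push_cast at hlcm
  rw [show 3 * n + 1 + 1 = 3 * n + 2 by ring, show 3 * n + 1 + 2 = 3 * n + 3 by ring] at hlcm
  rw [← mul_left_inj' hgcd_ne, hlcm]
  linear_combination (-(3 / 4) * (9 * (n : ℚ) ^ 3 + 18 * n ^ 2 + 11 * n + 2)) * hgcd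
end

section
/- An odd prime p satisfies p ≡ 5 (mod 12) if and only if the congruence x^4 ≡ 9 (mod p) has no solution. -/
/-!
Since `x ^ 4 - 9 = (x ^ 2 - 3) * (x ^ 2 + 3)`, the congruence is solvable iff `3` or `-3` is a
square mod `p`. Quadratic reciprocity gives `(-3 / p) = (p / 3)` and `(3 / p) = χ₄(p) (p / 3)`,
so both are non-squares exactly when `p ≡ 1 (mod 4)` and `p ≡ 2 (mod 3)`.
-/

theorem exists_pow_four_eq_sq_iff {R : Type*} [CommRing R] [NoZeroDivisors R] (a : R) :
    (∃ x : R, x ^ 4 = a ^ 2) ↔ IsSquare a ∨ IsSquare (-a) := by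
  constructor
  · rintro ⟨x, hx⟩
    have hfactor : (x ^ 2 - a) * (x ^ 2 + a) = 0 := by linear_combination hx
    rcases mul_eq_zero.mp hfactor with hminus | hplus
    · exact Or.inl ⟨x, by linear_combination -hminus⟩
    · exact Or.inr ⟨x, by linear_combination -hplus⟩
  · rintro (⟨r, hr⟩ | ⟨r, hr⟩)
    · exact ⟨r, by linear_combination (-(r * r + a)) * hr⟩
    · exact ⟨r, by linear_combination (a - r * r) * hr⟩

theorem Nat.Prime.mod_three_eq_one_or_two {p : ℕ} (hp : p.Prime) (hp3 : p ≠ 3) :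
    p % 3 = 1 ∨ p % 3 = 2 := by
  have : p % 3 ≠ 0 := fun h =>
    hp3 ((Nat.prime_dvd_prime_iff_eq Nat.prime_three hp).mp (Nat.dvd_of_mod_eq_zero h)).symm
  omega

namespace legendreSym

variable {p : ℕ} [Fact p.Prime]

theorem at_three_of_mod_three_eq_one {n : ℕ} (hn : n % 3 = 1) : legendreSym 3 n = 1 := by
  rw [legendreSym.mod]
  norm_cast
  rw [hn]
  decide

theorem at_three_of_mod_three_eq_two {n : ℕ} (hn : n % 3 = 2) : legendreSym 3 n = -1 := by
  rw [legendreSym.mod]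
  norm_cast
  rw [hn]
  decide

theorem at_neg_three (hp : p ≠ 2) : legendreSym p (-3) = legendreSym 3 p := by
  rw [at_neg hp, quadratic_reciprocity' hp (by decide),
    ZMod.χ₄_eq_neg_one_pow ((Nat.Prime.mod_two_eq_one_iff_ne_two Fact.out).mpr hp)]
  norm_num

theorem at_three (hp : p ≠ 2) : legendreSym p 3 = ZMod.χ₄ p * legendreSym 3 p := by
  rw [← at_neg_three hp, at_neg hp, ← mul_assoc, ← sq,
    ZMod.χ₄_eq_neg_one_pow ((Nat.Prime.mod_two_eq_one_iff_ne_two Fact.out).mpr hp), ← pow_mul,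
    (even_two.mul_left _).neg_one_pow, one_mul]

end legendreSym

namespace ZMod

variable {p : ℕ} [Fact p.Prime]

theorem isSquare_neg_three_iff (hp : p ≠ 2) : IsSquare (-3 : ZMod p) ↔ p % 3 ≠ 2 := by
  rcases eq_or_ne p 3 with rfl | hp3
  · exact iff_of_true ⟨0, by decide +revert⟩ (by decide)
  have hne : ((-3 : ℤ) : ZMod p) ≠ 0 := by
    exact_mod_cast neg_ne_zero.mpr (prime_ne_zero p 3 hp3)
  rw [← Int.cast_ofNat, ← Int.cast_neg, ← legendreSym.eq_one_iff p hne, legendreSym.at_neg_three hp]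
  rcases (Fact.out : p.Prime).mod_three_eq_one_or_two hp3 with hmod3 | hmod3
  · simp [legendreSym.at_three_of_mod_three_eq_one hmod3, hmod3]
  · simp [legendreSym.at_three_of_mod_three_eq_two hmod3, hmod3]

theorem isSquare_three_iff (hp : p ≠ 2) :
    IsSquare (3 : ZMod p) ↔ p % 12 ≠ 5 ∧ p % 12 ≠ 7 := by
  rcases eq_or_ne p 3 with rfl | hp3
  · exact iff_of_true ⟨0, by decide +revert⟩ (by decide)
  have hne : ((3 : ℤ) : ZMod p) ≠ 0 := by exact_mod_cast prime_ne_zero p 3 hp3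
  have hodd := (Nat.Prime.mod_two_eq_one_iff_ne_two Fact.out).mpr hp
  rw [← Int.cast_ofNat, ← legendreSym.eq_one_iff p hne, legendreSym.at_three hp]
  rcases (Fact.out : p.Prime).mod_three_eq_one_or_two hp3 with hmod3 | hmod3 <;>
    rcases Nat.odd_mod_four_iff.mp hodd with hmod4 | hmod4
  · simp [legendreSym.at_three_of_mod_three_eq_one hmod3, χ₄_nat_one_mod_four hmod4]; omega
  · simp [legendreSym.at_three_of_mod_three_eq_one hmod3, χ₄_nat_three_mod_four hmod4]; omega
  · simp [legendreSym.at_three_of_mod_three_eq_two hmod3, χ₄_nat_one_mod_four hmod4]; omega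
  · simp [legendreSym.at_three_of_mod_three_eq_two hmod3, χ₄_nat_three_mod_four hmod4]; omega

end ZMod

theorem stmt10_general (p : ℕ) (hp : p.Prime) :
    p % 12 = 5 ↔ ¬ ∃ x : ZMod p, x ^ 4 = 9 := by
  have := Fact.mk hp
  rcases eq_or_ne p 2 with rfl | hp2
  · exact iff_of_false (by decide) (not_not.mpr ⟨1, by decide +revert⟩)
  have hodd := (Nat.Prime.mod_two_eq_one_iff_ne_two Fact.out).mpr hp2
  rw [show (9 : ZMod p) = 3 ^ 2 by norm_num, exists_pow_four_eq_sq_iff,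
    ZMod.isSquare_three_iff hp2, ZMod.isSquare_neg_three_iff hp2]
  omega

theorem stmt10 (p : ℕ) (hp : p.Prime) (hodd : p ≠ 2) :
    p % 12 = 5 ↔ ¬ ∃ x : ZMod p, x ^ 4 = 9 :=
  stmt10_general p hp
end

section
/- A positive integer n has a cube n^3 expressible as a sum of two nonzero squares if and only if n itself is expressible as a sum of two nonzero squares. -/
/-!
By Fermat's theorem on sums of two squares, `n` and `n ^ 3` are sums of two (possibly zero)
squares simultaneously, since primes `q ≡ 3 (mod 4)` occur in `n ^ 3` with three times their
multiplicity in `n`. It remains to treat `n = y ^ 2`, where a representation with a zero term is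
not enough. A square `k ^ 2` is a sum of two nonzero squares exactly when `k` has a prime factor
`p ≡ 1 (mod 4)`: such a `p = u ^ 2 + v ^ 2` gives `p ^ 2 = (u ^ 2 - v ^ 2) ^ 2 + (2 u v) ^ 2`, and
conversely the primitive part `k'` of `k' ^ 2 = a ^ 2 + b ^ 2` has `-1` as a square modulo
`k' ^ 2`, which rules out the prime factors `2` and `q ≡ 3 (mod 4)`. As `y` and `y ^ 3` have the
same prime factors, `y ^ 2` qualifies whenever `(y ^ 3) ^ 2 = n ^ 3` does.
-/

def IsSumTwoNonzeroSq (m : ℕ) : Prop :=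
  ∃ a b : ℕ, 0 < a ∧ 0 < b ∧ m = a ^ 2 + b ^ 2

namespace IsSumTwoNonzeroSq

variable {m : ℕ}

theorem pos (h : IsSumTwoNonzeroSq m) : 0 < m := by
  obtain ⟨a, b, ha, -, rfl⟩ := h
  positivity

theorem sq_mul (h : IsSumTwoNonzeroSq m) {k : ℕ} (hk : 0 < k) :
    IsSumTwoNonzeroSq (k ^ 2 * m) := by
  obtain ⟨a, b, ha, hb, rfl⟩ := h
  exact ⟨k * a, k * b, by positivity, by positivity, by ring⟩

end IsSumTwoNonzeroSq

theorem exists_sq_add_sq_of_odd_pow {n k : ℕ} (hk : Odd k)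
    (h : ∃ x y : ℕ, n ^ k = x ^ 2 + y ^ 2) : ∃ x y : ℕ, n = x ^ 2 + y ^ 2 := by
  rw [Nat.eq_sq_add_sq_iff] at h ⊢
  intro q hq hq3
  have : Fact q.Prime := ⟨Nat.prime_of_mem_primeFactors hq⟩
  have hqk := h q (by rwa [Nat.primeFactors_pow _ hk.pos.ne']) hq3
  rw [padicValNat.pow] at hqk
  exact (Nat.even_mul.mp hqk).resolve_left (Nat.not_even_iff_odd.mpr hk)

theorem isSumTwoNonzeroSq_sq_of_lt {u v : ℕ} (hv : 0 < v) (huv : v < u) :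
    IsSumTwoNonzeroSq ((u ^ 2 + v ^ 2) ^ 2) := by
  have hu : 0 < u := hv.trans huv
  have hlt : v ^ 2 < u ^ 2 := by gcongr
  refine ⟨u ^ 2 - v ^ 2, 2 * u * v, Nat.sub_pos_of_lt hlt, by positivity, ?_⟩
  zify [hlt.le]
  ring

theorem Nat.Prime.isSumTwoNonzeroSq_sq {p : ℕ} (hp : p.Prime) (hp4 : p % 4 = 1) :
    IsSumTwoNonzeroSq (p ^ 2) := by
  have : Fact p.Prime := ⟨hp⟩
  obtain ⟨u, v, rfl⟩ := Nat.Prime.sq_add_sq (p := p) (by omega)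
  have hu : 0 < u := Nat.pos_of_ne_zero <| by
    rintro rfl
    exact Nat.Prime.not_prime_pow' (n := 2) (by norm_num) (by simpa using hp)
  have hv : 0 < v := Nat.pos_of_ne_zero <| by
    rintro rfl
    exact Nat.Prime.not_prime_pow' (n := 2) (by norm_num) (by simpa using hp)
  rcases Nat.lt_or_gt_of_ne (show u ≠ v by rintro rfl; omega) with huv | hvu
  · rw [add_comm]
    exact isSumTwoNonzeroSq_sq_of_lt hu huv
  · exact isSumTwoNonzeroSq_sq_of_lt hv hvu

theorem isSumTwoNonzeroSq_sq_of_dvd {p k : ℕ} (hp : p.Prime) (hp4 : p % 4 = 1) (hpk : p ∣ k)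
    (hk : k ≠ 0) : IsSumTwoNonzeroSq (k ^ 2) := by
  obtain ⟨s, rfl⟩ := hpk
  rw [mul_pow, mul_comm]
  exact (hp.isSumTwoNonzeroSq_sq hp4).sq_mul (Nat.pos_of_ne_zero (right_ne_zero_of_mul hk))

theorem exists_prime_mod_four_eq_one_dvd_of_coprime {k a b : ℕ} (hk : k ≠ 1)
    (h : k ^ 2 = a ^ 2 + b ^ 2) (hab : a.Coprime b) : ∃ p, p.Prime ∧ p % 4 = 1 ∧ p ∣ k := by
  have hs : IsSquare (-1 : ZMod (k ^ 2)) := ZMod.isSquare_neg_one_of_eq_sq_add_sq_of_coprime h hab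
  have hk2 : ¬ 2 ∣ k := fun h2 => by
    have : IsSquare (-1 : ZMod (2 ^ 2)) := ZMod.isSquare_neg_one_of_dvd (pow_dvd_pow_of_dvd h2 2) hs
    revert this
    decide
  have hp := Nat.minFac_prime hk
  have : Fact k.minFac.Prime := ⟨hp⟩
  have hp3 : k.minFac % 4 ≠ 3 := ZMod.exists_sq_eq_neg_one_iff.mp <|
    ZMod.isSquare_neg_one_of_dvd (k.minFac_dvd.trans (dvd_pow_self k two_ne_zero)) hs
  have hp2 : ¬ 2 ∣ k.minFac := fun h2 => hk2 (h2.trans k.minFac_dvd)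
  exact ⟨k.minFac, hp, by omega, k.minFac_dvd⟩

theorem exists_prime_mod_four_eq_one_dvd {k : ℕ} (h : IsSumTwoNonzeroSq (k ^ 2)) :
    ∃ p, p.Prime ∧ p % 4 = 1 ∧ p ∣ k := by
  obtain ⟨a, b, ha, hb, hk⟩ := h
  obtain ⟨g, a', b', hg, hab, rfl, rfl⟩ := Nat.exists_coprime' (Nat.gcd_pos_of_pos_left b ha)
  obtain ⟨k', rfl⟩ : g ∣ k :=
    (Nat.pow_dvd_pow_iff two_ne_zero).mp ⟨a' ^ 2 + b' ^ 2, by rw [hk]; ring⟩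
  have hk' : k' ^ 2 = a' ^ 2 + b' ^ 2 := by
    apply Nat.eq_of_mul_eq_mul_left (pow_pos hg 2)
    linear_combination hk
  have hk'1 : k' ≠ 1 := by
    rintro rfl
    have : 0 < a' := Nat.pos_of_mul_pos_right ha
    have : 0 < b' := Nat.pos_of_mul_pos_right hb
    nlinarith
  obtain ⟨p, hp, hp4, hpk⟩ := exists_prime_mod_four_eq_one_dvd_of_coprime hk'1 hk' hab
  exact ⟨p, hp, hp4, dvd_mul_of_dvd_right hpk g⟩

theorem isSumTwoNonzeroSq_sq_of_sq_pow {y k : ℕ} (hk : k ≠ 0)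
    (h : IsSumTwoNonzeroSq ((y ^ k) ^ 2)) : IsSumTwoNonzeroSq (y ^ 2) := by
  obtain ⟨p, hp, hp4, hpy⟩ := exists_prime_mod_four_eq_one_dvd h
  refine isSumTwoNonzeroSq_sq_of_dvd hp hp4 (hp.dvd_of_dvd_pow hpy) ?_
  rintro rfl
  simpa [hk] using h.pos

theorem stmt13 (n : ℕ) (hn : 0 < n) :
    (∃ a b : ℕ, 0 < a ∧ 0 < b ∧ n ^ 3 = a ^ 2 + b ^ 2) ↔
      (∃ a b : ℕ, 0 < a ∧ 0 < b ∧ n = a ^ 2 + b ^ 2) := by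
  change IsSumTwoNonzeroSq (n ^ 3) ↔ IsSumTwoNonzeroSq n
  refine ⟨fun h => ?_, fun h => by simpa only [pow_succ] using h.sq_mul hn⟩
  have of_eq_sq : ∀ y, n = y ^ 2 → IsSumTwoNonzeroSq n := by
    rintro y rfl
    exact isSumTwoNonzeroSq_sq_of_sq_pow three_ne_zero (by rwa [← pow_mul, mul_comm, pow_mul])
  obtain ⟨a, b, -, -, hab⟩ := h
  obtain ⟨x, y, hxy⟩ := exists_sq_add_sq_of_odd_pow (by decide) ⟨a, b, hab⟩
  rcases Nat.eq_zero_or_pos x with rfl | hx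
  · exact of_eq_sq y (by simpa using hxy)
  rcases Nat.eq_zero_or_pos y with rfl | hy
  · exact of_eq_sq x (by simpa using hxy)
  exact ⟨x, y, hx, hy, hxy⟩
end

section
/- For even n ≥ 2, the number of equivalence classes under reversal of binary strings of length 2n-1 with exactly n ones that are not palindromes equals (1/4)·(C(2n,n) - C(n, n/2)). -/
open Finset



private lemma card_ones (m k : ℕ) :
    ((Finset.univ : Finset (Fin m → Bool)).filter
      (fun s => (Finset.univ.filter (fun i => s i = true)).card = k)).card = m.choose k := by
  classical
  rw [show m.choose k = (Finset.powersetCard k (Finset.univ : Finset (Fin m))).card by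
    simp [Finset.card_powersetCard]]
  refine Finset.card_bij' (fun s _ => Finset.univ.filter (fun i => s i = true))
    (fun t _ => fun i => decide (i ∈ t)) ?_ ?_ ?_ ?_
  · intro s hs
    simp only [Finset.mem_filter] at hs
    simp [Finset.mem_powersetCard, hs.2]
  · intro t ht
    simp only [Finset.mem_powersetCard] at ht
    simp only [Finset.mem_filter, Finset.mem_univ, true_and]
    rw [show (Finset.univ.filter fun i => decide (i ∈ t) = true) = t by ext i; simp]
    exact ht.2
  · intro s hs
    funext i
    simp
  · intro t ht
    ext i
    simp



private lemma pal_sum (m : ℕ) (s : Fin (2*m+1) → Bool) (hs : s ∘ Fin.rev = s) :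
    (Finset.univ.filter (fun i => s i = true)).card
      = 2 * ((Finset.univ : Finset (Fin m)).filter
            (fun i : Fin m => s ⟨i.val, by omega⟩ = true)).card
        + (if s ⟨m, by omega⟩ = true then 1 else 0) := by
  classical
  set c : ℕ → ℕ := fun j => if h : j < 2*m+1 then (if s ⟨j, h⟩ = true then 1 else 0) else 0 with hc
  have hpal : ∀ j, j ≤ 2*m → c (2*m - j) = c j := by
    intro j hj
    have h1 : 2*m - j < 2*m+1 := by omega
    have h2 : j < 2*m+1 := by omega
    simp only [hc, dif_pos h1, dif_pos h2]
    have hcf := congrFun hs ⟨j, h2⟩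
    simp only [Function.comp_apply] at hcf
    have hrev : (Fin.rev ⟨j, h2⟩ : Fin (2*m+1)) = ⟨2*m - j, h1⟩ := by
      ext
      simp [Fin.val_rev]
    rw [hrev] at hcf
    rw [hcf]
  have key : ∑ j ∈ Finset.range (2*m+1), c j
      = 2 * ∑ j ∈ Finset.range m, c j + c m := by
    have hsplit : ∑ j ∈ Finset.range m, c j + ∑ j ∈ Finset.Ico m (2*m+1), c j
        = ∑ j ∈ Finset.range (2*m+1), c j := Finset.sum_range_add_sum_Ico _ (by omega)
    have hIco : ∑ j ∈ Finset.Ico m (2*m+1), c j = ∑ j ∈ Finset.range (m+1), c (m + j) := by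
      rw [Finset.sum_Ico_eq_sum_range, show 2*m+1-m = m+1 from by omega]
    have hsucc : ∑ j ∈ Finset.range (m+1), c (m + j)
        = ∑ j ∈ Finset.range m, c (m + (j+1)) + c m := by
      rw [Finset.sum_range_succ']
      simp
    have hrefl : ∑ j ∈ Finset.range m, c (m + (j+1)) = ∑ j ∈ Finset.range m, c j := by
      calc ∑ j ∈ Finset.range m, c (m + (j+1))
          = ∑ j ∈ Finset.range m, c (m - 1 - j) := by
            apply Finset.sum_congr rfl
            intro j hj
            rw [Finset.mem_range] at hj
            have h := hpal (m + (j+1)) (by omega)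
            rw [show 2*m - (m+(j+1)) = m - 1 - j by omega] at h
            exact h.symm
        _ = ∑ j ∈ Finset.range m, c j := Finset.sum_range_reflect c m
    omega
  have h1 : (Finset.univ.filter (fun i => s i = true)).card = ∑ j ∈ Finset.range (2*m+1), c j := by
    rw [Finset.card_filter, ← Fin.sum_univ_eq_sum_range c (2*m+1)]
    apply Finset.sum_congr rfl
    intro i _
    simp only [hc]
    rw [dif_pos i.isLt]
  have h2 : ((Finset.univ : Finset (Fin m)).filter
        (fun i : Fin m => s ⟨i.val, by omega⟩ = true)).card = ∑ j ∈ Finset.range m, c j := by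
    rw [Finset.card_filter, ← Fin.sum_univ_eq_sum_range (fun j => c j) m]
    apply Finset.sum_congr rfl
    intro i _
    simp only [hc]
    rw [dif_pos (show (i : ℕ) < 2*m+1 by omega)]
  have h3 : (if s ⟨m, by omega⟩ = true then 1 else 0) = c m := by
    simp only [hc]
    rw [dif_pos (show m < 2*m+1 by omega)]
  rw [h1, h2, h3, key]

/-- extend a half-string to ℕ by `false` padding -/
private def ext0 (m : ℕ) (s' : Fin m → Bool) (a : ℕ) : Bool :=
  if h : a < m then s' ⟨a, h⟩ else false

private lemma pal_count (m k : ℕ) :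
    ((Finset.univ : Finset (Fin (2*m+1) → Bool)).filter
      (fun s => (Finset.univ.filter (fun i => s i = true)).card = 2*k ∧ s ∘ Fin.rev = s)).card
    = m.choose k := by
  classical
  rw [← card_ones m k]
  refine Finset.card_bij'
    (fun s _ => fun i : Fin m => s ⟨i.val, by omega⟩)
    (fun s' _ => fun j : Fin (2*m+1) => ext0 m s' (min j.val (2*m - j.val))) ?_ ?_ ?_ ?_
  · -- forward map lands in target
    intro s hs
    simp only [Finset.mem_filter, Finset.mem_univ, true_and] at hs ⊢
    obtain ⟨hcard, hpal⟩ := hs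
    have h := pal_sum m s hpal
    rw [hcard] at h
    split_ifs at h with hmid
    · omega
    · omega
  · -- backward map lands in source
    intro s' hs'
    simp only [Finset.mem_filter, Finset.mem_univ, true_and] at hs' ⊢
    set g : Fin (2*m+1) → Bool := fun j => ext0 m s' (min j.val (2*m - j.val)) with hg
    have hpal : g ∘ Fin.rev = g := by
      funext j
      simp only [Function.comp_apply, hg]
      congr 1
      rw [Fin.val_rev]
      omega
    have hmid : g ⟨m, by omega⟩ = false := by
      simp only [hg]
      rw [show min m (2*m - m) = m by omega]
      simp [ext0]
    have hhalf : ∀ i : Fin m, g ⟨i.val, by omega⟩ = s' i := by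
      intro i
      simp only [hg]
      rw [show min i.val (2*m - i.val) = i.val by omega]
      simp [ext0, i.isLt]
    refine ⟨?_, hpal⟩
    have h := pal_sum m g hpal
    rw [hmid] at h
    simp only [Bool.false_eq_true, if_false] at h
    rw [h]
    have : ((Finset.univ : Finset (Fin m)).filter (fun i : Fin m => g ⟨i.val, by omega⟩ = true))
        = (Finset.univ.filter (fun i => s' i = true)) := by
      apply Finset.filter_congr
      intro i _
      rw [hhalf i]
    rw [this, hs']
    omega
  · -- g ∘ f = id on palindromes
    intro s hs
    simp only [Finset.mem_filter, Finset.mem_univ, true_and] at hs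
    obtain ⟨hcard, hpal⟩ := hs
    have hmid : s ⟨m, by omega⟩ = false := by
      have h := pal_sum m s hpal
      rw [hcard] at h
      split_ifs at h with hmid
      · omega
      · simpa using hmid
    funext j
    beta_reduce
    rcases lt_trichotomy j.val m with hj | hj | hj
    · rw [show min j.val (2*m - j.val) = j.val by omega]
      simp only [ext0, dif_pos hj]
    · rw [show min j.val (2*m - j.val) = m by omega]
      simp only [ext0]
      rw [dif_neg (by omega)]
      rw [show j = ⟨m, by omega⟩ from Fin.ext hj] 
      exact hmid.symm
    · rw [show min j.val (2*m - j.val) = 2*m - j.val by omega]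
      have h2 : 2*m - j.val < m := by omega
      simp only [ext0, dif_pos h2]
      have hcf := congrFun hpal j
      simp only [Function.comp_apply] at hcf
      have hrev : (Fin.rev j : Fin (2*m+1)) = ⟨2*m - j.val, by omega⟩ := by
        ext
        simp [Fin.val_rev]
      rw [hrev] at hcf
      exact hcf
  · -- f ∘ g = id
    intro s' hs'
    funext i
    beta_reduce
    rw [show min i.val (2*m - i.val) = i.val by omega]
    simp [ext0, i.isLt]


/-- The number of non-palindromic binary strings of length `2n-1` with exactly `n` black
beads; the number of non-palindromic reversible such strings (equivalence classes under
reversal) is half of it. -/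
def nonPalBW (n : ℕ) : ℕ :=
  ((Finset.univ : Finset (Fin (2 * n - 1) → Bool)).filter
    (fun s => (Finset.univ.filter (fun i => s i = true)).card = n ∧ s ∘ Fin.rev ≠ s)).card

private lemma double_choose (j : ℕ) (hj : 1 ≤ j) :
    (2*j).choose j = 2 * ((2*j-1).choose j) := by
  obtain ⟨i, rfl⟩ : ∃ i, j = i+1 := ⟨j-1, by omega⟩
  have hsymm := Nat.choose_symm (show i+1 ≤ 2*i+1 by omega)
  rw [show 2*i+1-(i+1) = i from by omega] at hsymm
  rw [show 2*(i+1)-1 = 2*i+1 from by omega, show 2*(i+1) = (2*i+1)+1 from by omega,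
      Nat.choose_succ_succ]
  simp only [Nat.succ_eq_add_one]
  omega

theorem stmt15 (n : ℕ) (hn : 2 ≤ n) (he : Even n) :
    (nonPalBW n : ℚ) / 2 =
      ((Nat.choose (2 * n) n : ℚ) - Nat.choose n (n / 2)) / 4 := by
  classical
  have hcount : nonPalBW n + (n-1).choose (n/2) = (2*n-1).choose n := by
    unfold nonPalBW
    rw [show 2*n - 1 = 2*(n-1)+1 from by omega]
    have htot := card_ones (2*(n-1)+1) n
    have hpal := pal_count (n-1) (n/2)
    have h2 : 2*(n/2) = n := Nat.two_mul_div_two_of_even he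
    rw [h2] at hpal
    have hsplit := Finset.card_filter_add_card_filter_not
      (s := (Finset.univ : Finset (Fin (2*(n-1)+1) → Bool)).filter
        (fun s => (Finset.univ.filter (fun i => s i = true)).card = n))
      (p := fun s => s ∘ Fin.rev = s)
    rw [Finset.filter_filter, Finset.filter_filter] at hsplit
    simp only [ne_eq]
    rw [hpal, htot] at hsplit
    rw [Nat.add_comm]
    exact hsplit
  have hA : ((2*n).choose n : ℚ) = 2 * (((2*n-1).choose n : ℕ) : ℚ) := by
    exact_mod_cast double_choose n (by omega)
  have hB : (n.choose (n/2) : ℚ) = 2 * (((n-1).choose (n/2) : ℕ) : ℚ) := by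
    have h := double_choose (n/2) (by omega)
    rw [Nat.two_mul_div_two_of_even he] at h
    exact_mod_cast h
  have hC : (nonPalBW n : ℚ) + ((n-1).choose (n/2) : ℕ) = (((2*n-1).choose n : ℕ) : ℚ) := by
    exact_mod_cast hcount
  rw [hA, hB]
  field_simp
  linarith
end

section
/- For every n ≥ 0, the number of distinct values among the 2-adic valuations v₂(C(n,j)) for 0 ≤ j ≤ n equals ⌊log₂(n+1)⌋ + 1 - v₂(n+1). -/
/-!
Write `w k` for the 2-adic valuation of `k!`, so that `v₂ (C(i + j, j)) = w (i + j) - w i - w j`.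
Legendre's formula gives `w (2 * i) = w (2 * i + 1) = w i + i`; splitting `C(n, j)` according to the
parities of `j` and `n - j` then shows that row `2 * m + 1` of Pascal's triangle has the same set of
2-adic valuations as row `m`, while row `2 * m + 2` has those of row `m + 1` together with those of
row `m` shifted by `v₂ (m + 1) + 1`. Induction on `n` then identifies the set of valuations in
row `n` with `{0, 1, …, ⌊log₂ (n + 1)⌋ - v₂ (n + 1)}`.
-/

open Finset
open scoped Nat

lemma padicValNat_add_choose_add_factorial_add_factorial (p : ℕ) [Fact p.Prime] (i j : ℕ) :
    padicValNat p ((i + j).choose j) + padicValNat p i ! + padicValNat p j ! =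
      padicValNat p (i + j)! := by
  rw [← Nat.add_choose_mul_factorial_mul_factorial i j,
    padicValNat.mul (mul_pos (Nat.choose_pos (Nat.le_add_left j i)) i.factorial_pos).ne'
      (Nat.factorial_ne_zero j),
    padicValNat.mul (Nat.choose_pos (Nat.le_add_left j i)).ne' (Nat.factorial_ne_zero i)]

lemma padicValNat_two_factorial_two_mul_add_one (i : ℕ) :
    padicValNat 2 (2 * i + 1)! = padicValNat 2 i ! + i := by
  rw [padicValNat_factorial_mul_add i one_lt_two, padicValNat_factorial_mul]

lemma padicValNat_factorial_succ (p : ℕ) [Fact p.Prime] (k : ℕ) :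
    padicValNat p (k + 1)! = padicValNat p k ! + padicValNat p (k + 1) := by
  rw [Nat.factorial_succ, padicValNat.mul k.succ_ne_zero (Nat.factorial_ne_zero k), add_comm]

section ChooseParity

variable (i j : ℕ)

lemma padicValNat_two_choose_two_mul_add_two_mul :
    padicValNat 2 ((2 * i + 2 * j).choose (2 * j)) = padicValNat 2 ((i + j).choose j) := by
  have hrow := padicValNat_add_choose_add_factorial_add_factorial 2 i j
  have hdouble := padicValNat_add_choose_add_factorial_add_factorial 2 (2 * i) (2 * j)
  rw [← mul_add] at hdouble ⊢
  rw [padicValNat_factorial_mul, padicValNat_factorial_mul,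
    padicValNat_factorial_mul] at hdouble
  omega

lemma padicValNat_two_choose_two_mul_add_two_mul_add_one :
    padicValNat 2 ((2 * i + (2 * j + 1)).choose (2 * j + 1)) =
      padicValNat 2 ((i + j).choose j) := by
  have hrow := padicValNat_add_choose_add_factorial_add_factorial 2 i j
  have hdouble := padicValNat_add_choose_add_factorial_add_factorial 2 (2 * i) (2 * j + 1)
  rw [← add_assoc, ← mul_add] at hdouble ⊢
  rw [padicValNat_two_factorial_two_mul_add_one,
    padicValNat_factorial_mul, padicValNat_two_factorial_two_mul_add_one] at hdouble
  omega

lemma padicValNat_two_choose_two_mul_add_one_add_two_mul :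
    padicValNat 2 ((2 * i + 1 + 2 * j).choose (2 * j)) = padicValNat 2 ((i + j).choose j) := by
  have hrow := padicValNat_add_choose_add_factorial_add_factorial 2 i j
  have hdouble := padicValNat_add_choose_add_factorial_add_factorial 2 (2 * i + 1) (2 * j)
  rw [show 2 * i + 1 + 2 * j = 2 * (i + j) + 1 by ring] at hdouble ⊢
  rw [padicValNat_two_factorial_two_mul_add_one,
    padicValNat_two_factorial_two_mul_add_one, padicValNat_factorial_mul] at hdouble
  omega

lemma padicValNat_two_choose_two_mul_add_one_add_two_mul_add_one :
    padicValNat 2 ((2 * i + 1 + (2 * j + 1)).choose (2 * j + 1)) =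
      padicValNat 2 ((i + j).choose j) + (padicValNat 2 (i + j + 1) + 1) := by
  have hrow := padicValNat_add_choose_add_factorial_add_factorial 2 i j
  have hsucc := padicValNat_factorial_succ 2 (i + j)
  have hdouble := padicValNat_add_choose_add_factorial_add_factorial 2 (2 * i + 1) (2 * j + 1)
  rw [show 2 * i + 1 + (2 * j + 1) = 2 * (i + j + 1) by ring] at hdouble ⊢
  rw [padicValNat_factorial_mul, padicValNat_two_factorial_two_mul_add_one,
    padicValNat_two_factorial_two_mul_add_one] at hdouble
  omega

end ChooseParity

def twoAdicValsChoose (n : ℕ) : Finset ℕ :=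
  (range (n + 1)).image fun j => padicValNat 2 (n.choose j)

lemma mem_twoAdicValsChoose {n t : ℕ} :
    t ∈ twoAdicValsChoose n ↔ ∃ i j, i + j = n ∧ padicValNat 2 ((i + j).choose j) = t := by
  simp only [twoAdicValsChoose, mem_image, mem_range]
  constructor
  · rintro ⟨j, hj, rfl⟩
    exact ⟨n - j, j, by omega, by rw [Nat.sub_add_cancel (by omega)]⟩
  · rintro ⟨i, j, rfl, rfl⟩
    exact ⟨j, by omega, rfl⟩

lemma twoAdicValsChoose_zero : twoAdicValsChoose 0 = {0} := by
  simp [twoAdicValsChoose]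

lemma twoAdicValsChoose_two_mul_add_one (m : ℕ) :
    twoAdicValsChoose (2 * m + 1) = twoAdicValsChoose m := by
  ext t
  simp only [mem_twoAdicValsChoose]
  constructor
  · rintro ⟨a, b, hab, rfl⟩
    obtain ⟨i, rfl | rfl⟩ := Nat.even_or_odd' a <;>
      obtain ⟨j, rfl | rfl⟩ := Nat.even_or_odd' b
    · omega
    · exact ⟨i, j, by omega, (padicValNat_two_choose_two_mul_add_two_mul_add_one i j).symm⟩
    · exact ⟨i, j, by omega, (padicValNat_two_choose_two_mul_add_one_add_two_mul i j).symm⟩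
    · omega
  · rintro ⟨i, j, rfl, rfl⟩
    exact ⟨2 * i + 1, 2 * j, by ring, padicValNat_two_choose_two_mul_add_one_add_two_mul i j⟩

lemma twoAdicValsChoose_two_mul_add_two (m : ℕ) :
    twoAdicValsChoose (2 * m + 2) = twoAdicValsChoose (m + 1) ∪
      (twoAdicValsChoose m).image (· + (padicValNat 2 (m + 1) + 1)) := by
  ext t
  simp only [mem_union, mem_image, mem_twoAdicValsChoose]
  constructor
  · rintro ⟨a, b, hab, rfl⟩
    obtain ⟨i, rfl | rfl⟩ := Nat.even_or_odd' a <;>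
      obtain ⟨j, rfl | rfl⟩ := Nat.even_or_odd' b
    · exact .inl ⟨i, j, by omega, (padicValNat_two_choose_two_mul_add_two_mul i j).symm⟩
    · omega
    · omega
    · have hij : i + j = m := by omega
      refine .inr ⟨_, ⟨i, j, hij, rfl⟩, ?_⟩
      rw [padicValNat_two_choose_two_mul_add_one_add_two_mul_add_one, hij]
  · rintro (⟨i, j, hij, rfl⟩ | ⟨_, ⟨i, j, rfl, rfl⟩, rfl⟩)
    · exact ⟨2 * i, 2 * j, by omega, padicValNat_two_choose_two_mul_add_two_mul i j⟩
    · exact ⟨2 * i + 1, 2 * j + 1, by ring,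
        padicValNat_two_choose_two_mul_add_one_add_two_mul_add_one i j⟩

lemma log_two_two_mul_add_one {m : ℕ} (hm : m ≠ 0) :
    Nat.log 2 (2 * m + 1) = Nat.log 2 m + 1 := by
  have hhalf := Nat.log_div_base 2 (2 * m + 1)
  have hpos := Nat.log_pos one_lt_two (by omega : 2 ≤ 2 * m + 1)
  rw [show (2 * m + 1) / 2 = m by omega] at hhalf
  omega

lemma padicValNat_two_add_padicValNat_two_succ_le_log (k : ℕ) :
    padicValNat 2 k + padicValNat 2 (k + 1) ≤ Nat.log 2 (k + 1) := by
  obtain ⟨i, rfl | rfl⟩ := Nat.even_or_odd' k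
  · rw [padicValNat.eq_zero_of_not_dvd (by omega : ¬ 2 ∣ 2 * i + 1), add_zero]
    exact (padicValNat_le_nat_log _).trans (Nat.log_mono_right (by omega))
  · rw [padicValNat.eq_zero_of_not_dvd (by omega : ¬ 2 ∣ 2 * i + 1), zero_add]
    exact padicValNat_le_nat_log _

theorem twoAdicValsChoose_eq_range (n : ℕ) :
    twoAdicValsChoose n = range (Nat.log 2 (n + 1) + 1 - padicValNat 2 (n + 1)) := by
  induction n using Nat.strong_induction_on with | _ n ih => ?_
  obtain ⟨m, rfl | rfl⟩ := Nat.even_or_odd' n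
  · rcases m with _ | m
    · simp [twoAdicValsChoose_zero]
    rw [show 2 * (m + 1) = 2 * m + 2 by ring, twoAdicValsChoose_two_mul_add_two,
      ih (m + 1) (by omega), ih m (by omega),
      show 2 * m + 2 + 1 = 2 * (m + 1) + 1 by ring,
      log_two_two_mul_add_one (by omega : m + 1 ≠ 0),
      padicValNat.eq_zero_of_not_dvd (by omega : ¬ 2 ∣ 2 * (m + 1) + 1)]
    -- the shifted block starts inside the first one since `m + 1` or `m + 2` is odd
    have hval := padicValNat_two_add_padicValNat_two_succ_le_log (m + 1)
    have hlog : Nat.log 2 (m + 1 + 1) ≤ Nat.log 2 (m + 1) + 1 := by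
      rw [← log_two_two_mul_add_one (by omega : m + 1 ≠ 0)]
      exact Nat.log_mono_right (by omega)
    have hval_le_log := padicValNat_le_nat_log (p := 2) (m + 1)
    simp only [range_eq_Ico, image_add_right_Ico]
    ext t
    simp only [mem_union, mem_Ico]
    omega
  · rw [twoAdicValsChoose_two_mul_add_one, ih m (by omega),
      show 2 * m + 1 + 1 = 2 * (m + 1) by ring,
      padicValNat.mul two_ne_zero (by omega : m + 1 ≠ 0),
      padicValNat_self, mul_comm, Nat.log_mul_base one_lt_two (by omega : m + 1 ≠ 0)]
    congr 1
    omega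

theorem stmt17 (n : ℕ) :
    ((Finset.range (n + 1)).image (fun j => (Nat.choose n j).factorization 2)).card =
      Nat.log 2 (n + 1) + 1 - (n + 1).factorization 2 := by
  have hvals : (range (n + 1)).image (fun j => (n.choose j).factorization 2) =
      twoAdicValsChoose n :=
    image_congr fun j _ => Nat.factorization_def _ Nat.prime_two
  rw [hvals, twoAdicValsChoose_eq_range, card_range, Nat.factorization_def _ Nat.prime_two]
end

section
/- Define a sequence by a(0)=0, a(2n)=a(n)+2n, a(2n+1)=-a(n)+6n+3 (over the integers). Then a nonnegative integer m has an even number of ones in its binary representation if and only if m is in the range of a. -/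
/-!
Induction along `n ↦ 2n, 2n + 1` gives the closed form `a n = 2n + (s₂(n) mod 2)`, where
`s₂` is the binary digit sum. Since `s₂(2n + r) = s₂(n) + r` for a bit `r`, the numbers
`2n + (s₂(n) mod 2)` are exactly those whose last bit repairs the parity of the preceding
ones, i.e. those with an even digit sum.
-/

theorem Nat.digits_two_sum_two_mul_add {r : ℕ} (hr : r < 2) (n : ℕ) :
    (Nat.digits 2 (2 * n + r)).sum = (Nat.digits 2 n).sum + r := by
  rcases Nat.eq_zero_or_pos r with rfl | hr0
  · rcases Nat.eq_zero_or_pos n with rfl | hn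
    · simp
    · rw [add_zero, ← zero_add (2 * n), Nat.digits_add 2 one_lt_two 0 n two_pos (.inr hn.ne')]
      simp
  · rw [add_comm, Nat.digits_add 2 one_lt_two r n hr (.inl hr0.ne'), List.sum_cons, add_comm]

theorem Nat.even_digits_two_sum_iff_exists (m : ℕ) :
    Even (Nat.digits 2 m).sum ↔ ∃ n, 2 * n + (Nat.digits 2 n).sum % 2 = m := by
  constructor
  · intro h
    have hsum := Nat.digits_two_sum_two_mul_add (Nat.mod_lt m two_pos) (m / 2)
    rw [Nat.div_add_mod] at hsum
    rw [hsum, Nat.even_iff] at h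
    exact ⟨m / 2, by omega⟩
  · rintro ⟨n, rfl⟩
    rw [Nat.digits_two_sum_two_mul_add (Nat.mod_lt _ two_pos), Nat.even_iff]
    omega

theorem eq_two_mul_add_digits_two_sum_mod (a : ℕ → ℤ) (h0 : a 0 = 0)
    (heven : ∀ n : ℕ, a (2 * n) = a n + 2 * n)
    (hodd : ∀ n : ℕ, a (2 * n + 1) = -a n + 6 * n + 3) (n : ℕ) :
    a n = 2 * n + ((Nat.digits 2 n).sum % 2 : ℕ) := by
  induction n using Nat.evenOddRec with
  | h0 => simp [h0]
  | h_even n ih =>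
    have hsum : (Nat.digits 2 (2 * n)).sum = (Nat.digits 2 n).sum := by
      simpa using Nat.digits_two_sum_two_mul_add two_pos n
    rw [heven, ih, hsum]
    push_cast
    ring
  | h_odd n ih =>
    rw [hodd, ih, Nat.digits_two_sum_two_mul_add one_lt_two]
    have : ((Nat.digits 2 n).sum + 1) % 2 + (Nat.digits 2 n).sum % 2 = 1 := by omega
    push_cast
    omega

theorem stmt18 (a : ℕ → ℤ) (h0 : a 0 = 0)
    (heven : ∀ n : ℕ, a (2 * n) = a n + 2 * n)
    (hodd : ∀ n : ℕ, a (2 * n + 1) = -a n + 6 * n + 3) (m : ℕ) :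
    Even ((Nat.digits 2 m).sum) ↔ ∃ n : ℕ, a n = m := by
  simp_rw [eq_two_mul_add_digits_two_sum_mod a h0 heven hodd, Nat.even_digits_two_sum_iff_exists]
  norm_cast
end
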